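/- The vector ζ̃ satisfies the norm bound ‖ζ̃‖ ≤ ψ_max·‖v‖, where ψ_max = max(ψ_ν,ψ_σ,ψ_η,ψ_ξ); consequently, for every ψ > 0 the perturbed control ζ^ψ = ζ⁰(Σ) + ψ·ζ̃ satisfies ‖ζ^ψ − ζ⁰(Σ)‖ ≤ ψ_max·‖v‖·ψ. -/
import Mathlib


open Finset

noncomputable section

namespace Stmt11

/-- The Euclidean norm of a vector in `ℝ^m`. -/
def enorm {m : ℕ} (z : Fin m → ℝ) : ℝ := Real.sqrt (∑ i, z i ^ 2)

/-- The reference control `ζ⁰(Σ) = (0, Σ, 0, 0)`. -/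
def zeta0 (Sig : ℝ) : Fin 4 → ℝ := ![0, Sig, 0, 0]

/-- The fourth standard basis vector `e₄` of `ℝ⁴`. -/
def e4 : Fin 4 → ℝ := fun i => if i = 3 then 1 else 0

/-- `c^⊤ Ψ v` for the diagonal matrix `Ψ = diag psi`. -/
def cPv (psi c v : Fin 4 → ℝ) : ℝ := ∑ i, c i * psi i * v i

/-- `c^⊤ Ψ c` for the diagonal matrix `Ψ = diag psi`. -/
def cPc (psi c : Fin 4 → ℝ) : ℝ := ∑ i, c i * psi i * c i

/-- The Lagrange multiplier `λ`. -/
def lam (psi c v : Fin 4 → ℝ) : ℝ :=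
  if 0 ≤ v 3 - cPv psi c v / cPc psi c * c 3 then cPv psi c v / cPc psi c
  else (cPv psi c v - c 3 * v 3 * psi 3) / (cPc psi c - c 3 ^ 2 * psi 3)

/-- The Lagrange multiplier `μ = max (-(v₄ - λ c₄)) 0`. -/
def mu (psi c v : Fin 4 → ℝ) : ℝ := max (-(v 3 - lam psi c v * c 3)) 0

/-- `ζ̃ = Ψ (v - λ c + μ e₄)`. -/
def zetaTilde (psi c v : Fin 4 → ℝ) : Fin 4 → ℝ := fun i =>
  psi i * (v i - lam psi c v * c i + mu psi c v * e4 i)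

/-- `H₁(ζ) = (1/(2ψ)) (ζ - ζ⁰(Σ))^⊤ Ψ⁻¹ (ζ - ζ⁰(Σ)) - v^⊤ (ζ - ζ⁰(Σ))`. -/
def H1 (Sig ψ : ℝ) (psi v : Fin 4 → ℝ) (z : Fin 4 → ℝ) : ℝ :=
  (1 / (2 * ψ)) * ∑ i, (z i - zeta0 Sig i) ^ 2 / psi i -
    ∑ i, v i * (z i - zeta0 Sig i)

/-- `ψ_max = max(ψ_ν, ψ_σ, ψ_η, ψ_ξ)`. -/
def psiMax (psi : Fin 4 → ℝ) : ℝ := Finset.univ.sup' Finset.univ_nonempty psi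

/-- Key contraction: the Ψ-weighted norm of `v - λ c + μ e₄` is at most that of `v`. -/
lemma weighted_contraction (psi c v : Fin 4 → ℝ)
    (hpsi : ∀ i, 0 < psi i) (hc : c 0 ≠ 0) :
    ∑ i, psi i * (v i - lam psi c v * c i + mu psi c v * e4 i) ^ 2 ≤
      ∑ i, psi i * v i ^ 2 := by
  have hP : cPv psi c v = c 0 * psi 0 * v 0 + c 1 * psi 1 * v 1 + c 2 * psi 2 * v 2
      + c 3 * psi 3 * v 3 := by simp [cPv, Fin.sum_univ_four]
  have hQ : cPc psi c = c 0 * psi 0 * c 0 + c 1 * psi 1 * c 1 + c 2 * psi 2 * c 2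
      + c 3 * psi 3 * c 3 := by simp [cPc, Fin.sum_univ_four]
  set P := cPv psi c v with hPdef
  set Q := cPc psi c with hQdef
  clear_value P Q
  have hc0 : 0 < psi 0 * c 0 ^ 2 := by
    have := hpsi 0
    have : (0:ℝ) < c 0 ^ 2 := by positivity
    positivity
  have hQpos : 0 < Q := by
    rw [hQ]
    nlinarith [mul_nonneg (hpsi 1).le (sq_nonneg (c 1)), mul_nonneg (hpsi 2).le (sq_nonneg (c 2)),
      mul_nonneg (hpsi 3).le (sq_nonneg (c 3)), hc0]
  have hD : 0 < Q - c 3 ^ 2 * psi 3 := by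
    rw [hQ]
    nlinarith [mul_nonneg (hpsi 1).le (sq_nonneg (c 1)), mul_nonneg (hpsi 2).le (sq_nonneg (c 2)),
      hc0]
  set L := lam psi c v with hLdef
  set M := mu psi c v with hMdef
  clear_value L M
  -- expansion of the weighted square sum
  have he0 : e4 0 = 0 := rfl
  have he1 : e4 1 = 0 := rfl
  have he2 : e4 2 = 0 := rfl
  have he3 : e4 3 = 1 := rfl
  have expand : ∑ i, psi i * (v i - L * c i + M * e4 i) ^ 2 =
      (∑ i, psi i * v i ^ 2) - 2 * L * P + L ^ 2 * Q
        + 2 * M * psi 3 * (v 3 - L * c 3) + M ^ 2 * psi 3 := by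
    simp only [Fin.sum_univ_four, he0, he1, he2, he3, hP, hQ]
    ring
  rw [expand]
  -- now case on the definition of lam
  by_cases h : 0 ≤ v 3 - P / Q * c 3
  · have h' : 0 ≤ v 3 - cPv psi c v / cPc psi c * c 3 := by
      rw [← hPdef, ← hQdef]; exact h
    have hL : L = P / Q := by rw [hLdef, lam, if_pos h', ← hPdef, ← hQdef]
    have hM : M = 0 := by
      have hle : -(v 3 - lam psi c v * c 3) ≤ 0 := by
        rw [← hLdef, hL]; linarith
      rw [hMdef, mu, max_eq_right hle]
    have hLQ : L * Q = P := by rw [hL]; field_simp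
    have hkey : (-2) * L * P + L ^ 2 * Q ≤ 0 := by
      have h1 : L ^ 2 * Q = L * P := by rw [sq, mul_assoc, hLQ]
      have h2 : 0 ≤ L * P := by
        have : L * P = L ^ 2 * Q := h1.symm
        rw [this]; positivity
      nlinarith
    rw [hM]
    linarith [hkey]
  · have h' : ¬ 0 ≤ v 3 - cPv psi c v / cPc psi c * c 3 := by
      rw [← hPdef, ← hQdef]; exact h
    have hL : L = (P - c 3 * v 3 * psi 3) / (Q - c 3 ^ 2 * psi 3) := by
      rw [hLdef, lam, if_neg h', ← hPdef, ← hQdef]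
    have hLD : L * (Q - c 3 ^ 2 * psi 3) = P - c 3 * v 3 * psi 3 := by
      rw [hL]; field_simp
    push_neg at h
    have hvQ : v 3 * Q - P * c 3 < 0 := by
      have hPQ : P / Q * Q = P := div_mul_cancel₀ _ hQpos.ne'
      have hprod : (v 3 - P / Q * c 3) * Q < 0 := mul_neg_of_neg_of_pos h hQpos
      have heq : (v 3 - P / Q * c 3) * Q = v 3 * Q - P * c 3 := by
        linear_combination (-(c 3)) * hPQ
      linarith [heq ▸ hprod]
    have hneg : v 3 - L * c 3 < 0 := by
      have h1 : (v 3 - L * c 3) * (Q - c 3 ^ 2 * psi 3) = v 3 * Q - P * c 3 := by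
        linear_combination (-(c 3)) * hLD
      by_contra hcon
      push_neg at hcon
      have h2 : 0 ≤ v 3 * Q - P * c 3 := h1 ▸ mul_nonneg hcon hD.le
      linarith
    have hM : M = -(v 3 - L * c 3) := by
      rw [hMdef, mu, ← hLdef, max_eq_left]
      linarith
    rw [hM]
    have hid : (- (2 * L * P)) + L ^ 2 * Q
        + 2 * (-(v 3 - L * c 3)) * psi 3 * (v 3 - L * c 3) + (-(v 3 - L * c 3)) ^ 2 * psi 3
        = -(L ^ 2 * (Q - c 3 ^ 2 * psi 3)) - psi 3 * v 3 ^ 2 := by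
      linear_combination (2 * L) * hLD
    have hn1 : 0 ≤ (Q - c 3 ^ 2 * psi 3) * L ^ 2 := mul_nonneg hD.le (sq_nonneg L)
    have hn2 : 0 ≤ psi 3 * v 3 ^ 2 := mul_nonneg (hpsi 3).le (sq_nonneg (v 3))
    linarith [hid, hn1, hn2]

/-- `‖ζ̃‖ ≤ ψ_max ‖v‖`; consequently for every `ψ > 0` the perturbed control
`ζ^ψ = ζ⁰(Σ) + ψ ζ̃` satisfies `‖ζ^ψ - ζ⁰(Σ)‖ ≤ ψ_max ‖v‖ ψ`. -/
theorem zetaTilde_norm_bound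
    (Sig : ℝ) (hSig : 0 < Sig) (psi c v : Fin 4 → ℝ)
    (hpsi : ∀ i, 0 < psi i) (hc : c 0 ≠ 0) :
    enorm (zetaTilde psi c v) ≤ psiMax psi * enorm v ∧
    (∀ ψ : ℝ, 0 < ψ →
      enorm (fun i => (zeta0 Sig i + ψ * zetaTilde psi c v i) - zeta0 Sig i) ≤
        psiMax psi * enorm v * ψ) := by
  have hpm : ∀ i, psi i ≤ psiMax psi := fun i => Finset.le_sup' psi (mem_univ i)
  have hpm0 : 0 < psiMax psi := lt_of_lt_of_le (hpsi 0) (hpm 0)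
  have key := weighted_contraction psi c v hpsi hc
  -- ∑ (ζ̃ i)^2 ≤ psiMax^2 * ∑ v i ^2
  have step1 : ∑ i, zetaTilde psi c v i ^ 2 ≤
      psiMax psi * ∑ i, psi i * (v i - lam psi c v * c i + mu psi c v * e4 i) ^ 2 := by
    rw [Finset.mul_sum]
    apply Finset.sum_le_sum
    intro i _
    have : zetaTilde psi c v i ^ 2 =
        psi i * (psi i * (v i - lam psi c v * c i + mu psi c v * e4 i) ^ 2) := by
      simp [zetaTilde]; ring
    rw [this]
    exact mul_le_mul_of_nonneg_right (hpm i)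
      (mul_nonneg (hpsi i).le (sq_nonneg _))
  have step2 : psiMax psi * ∑ i, psi i * v i ^ 2 ≤ psiMax psi * (psiMax psi * ∑ i, v i ^ 2) := by
    apply mul_le_mul_of_nonneg_left _ hpm0.le
    rw [Finset.mul_sum]
    apply Finset.sum_le_sum
    intro i _
    exact mul_le_mul_of_nonneg_right (hpm i) (sq_nonneg _)
  have main : ∑ i, zetaTilde psi c v i ^ 2 ≤ psiMax psi ^ 2 * ∑ i, v i ^ 2 := by
    calc ∑ i, zetaTilde psi c v i ^ 2
        ≤ psiMax psi * ∑ i, psi i * (v i - lam psi c v * c i + mu psi c v * e4 i) ^ 2 := step1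
      _ ≤ psiMax psi * ∑ i, psi i * v i ^ 2 := mul_le_mul_of_nonneg_left key hpm0.le
      _ ≤ psiMax psi * (psiMax psi * ∑ i, v i ^ 2) := step2
      _ = psiMax psi ^ 2 * ∑ i, v i ^ 2 := by ring
  have hfirst : enorm (zetaTilde psi c v) ≤ psiMax psi * enorm v := by
    rw [enorm, enorm]
    have h1 : Real.sqrt (∑ i, zetaTilde psi c v i ^ 2) ≤
        Real.sqrt (psiMax psi ^ 2 * ∑ i, v i ^ 2) := Real.sqrt_le_sqrt main
    have h2 : Real.sqrt (psiMax psi ^ 2 * ∑ i, v i ^ 2) =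
        psiMax psi * Real.sqrt (∑ i, v i ^ 2) := by
      rw [Real.sqrt_mul (by positivity), Real.sqrt_sq hpm0.le]
    linarith [h1, h2.le, h2.ge]
  refine ⟨hfirst, fun ψ hψ => ?_⟩
  have hsimp : enorm (fun i => (zeta0 Sig i + ψ * zetaTilde psi c v i) - zeta0 Sig i)
      = ψ * enorm (zetaTilde psi c v) := by
    rw [enorm, enorm]
    have : ∀ i, (zeta0 Sig i + ψ * zetaTilde psi c v i) - zeta0 Sig i
        = ψ * zetaTilde psi c v i := fun i => by ring
    simp only [this, mul_pow]
    rw [← Finset.mul_sum, Real.sqrt_mul (by positivity), Real.sqrt_sq hψ.le]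
  rw [hsimp]
  calc ψ * enorm (zetaTilde psi c v) ≤ ψ * (psiMax psi * enorm v) :=
        mul_le_mul_of_nonneg_left hfirst hψ.le
    _ = psiMax psi * enorm v * ψ := by ring

end Stmt11
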